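/- arXiv:1806.11196 — 4 statements merged into one kernel-verified Lean document; each statement's English description precedes it below -/
import Mathlib

section
/- Let t be a positive integer, G a P_t-free graph, and X, Y ⊆ V(G) disjoint sets where X is a stable set. Let Z_1, ..., Z_m be connected subsets of Y, pairwise disjoint, pairwise anticomplete (no edges between distinct Z_i, Z_j), and such that for every pair 1 ≤ i < j ≤ m there exists a vertex v_{i,j} ∈ X whose set of neighbors among Z_1, ..., Z_m meets exactly Z_i and Z_j (i.e., v_{i,j} has a neighbor in Z_h if and only if h ∈ {i,j}). Then m ≤ ⌈(t+1)/2⌉. -/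
/-! Put `Z 0, {v 0 1}, Z 1, {v 1 2}, …, Z (m - 1)` into layers `0, 1, …, 2 (m - 1)`. The layers are
disjoint, each induces a connected graph, consecutive layers are joined by an edge, and every edge
joins equal or consecutive layers. Hence inside their union a vertex of `Z 0` and one of `Z (m - 1)`
are at distance at least `2 (m - 1)`, and a shortest path between them is an induced path on
`2 m - 1 > t` vertices. -/

/-- `H` occurs as an induced subgraph of `G`. -/
def IsInducedCopy {W V : Type*} (H : SimpleGraph W) (G : SimpleGraph V) : Prop :=
  ∃ f : W ↪ V, ∀ a b, G.Adj (f a) (f b) ↔ H.Adj a b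

open Function

namespace SimpleGraph

variable {V : Type*} {G : SimpleGraph V} {u v : V}

theorem Walk.adj_getVert_iff_of_length_eq_dist (p : G.Walk u v) (hp : p.length = G.dist u v)
    {i j : ℕ} (hi : i ≤ p.length) (hj : j ≤ p.length) :
    G.Adj (p.getVert i) (p.getVert j) ↔ i + 1 = j ∨ j + 1 = i := by
  have no_shortcut : ∀ {i j}, j ≤ p.length → G.Adj (p.getVert i) (p.getVert j) → j ≤ i + 1 := by
    intro i j hj hadj
    have := G.dist_le ((p.take i).append (.cons hadj (p.drop j)))
    simp only [Walk.length_append, Walk.length_cons, Walk.take_length, Walk.drop_length] at this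
    omega
  refine ⟨fun hadj => ?_, ?_⟩
  · have hne : i ≠ j := by rintro rfl; exact G.irrefl hadj
    have := no_shortcut hj hadj
    have := no_shortcut hi hadj.symm
    omega
  · rintro (rfl | rfl)
    · exact p.adj_getVert_succ (by omega)
    · exact (p.adj_getVert_succ (by omega)).symm

theorem Reachable.nonempty_pathGraph_embedding (h : G.Reachable u v) {t : ℕ}
    (ht : t ≤ G.dist u v + 1) : Nonempty (pathGraph t ↪g G) := by
  obtain ⟨p, hpath, hp⟩ := h.exists_path_of_dist
  have hlt (i : Fin t) : (i : ℕ) ≤ p.length := by omega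
  refine ⟨⟨⟨fun i => p.getVert i, fun i j hij => Fin.ext ?_⟩, ?_⟩⟩
  · exact hpath.getVert_injOn (hlt i) (hlt j) hij
  · intro i j
    rw [pathGraph_adj]
    exact p.adj_getVert_iff_of_length_eq_dist hp (hlt i) (hlt j)

theorem Walk.le_length_of_layers {L : ℕ → Set V} (hdisj : Pairwise (Disjoint on L))
    (hcover : ∀ x, ∃ i, x ∈ L i) (hstep : ∀ i j, ∀ x ∈ L i, ∀ y ∈ L j, G.Adj x y → j ≤ i + 1)
    (p : G.Walk u v) {i j : ℕ} (hu : u ∈ L i) (hv : v ∈ L j) : j ≤ i + p.length := by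
  induction p generalizing i with
  | nil =>
    by_contra! hij
    exact Set.disjoint_left.mp (hdisj (by simpa using hij.ne)) hu hv
  | cons hadj p ih =>
    obtain ⟨k, hk⟩ := hcover _
    have := hstep i k _ hu _ hk hadj
    have := ih hk hv
    rw [Walk.length_cons]
    omega

theorem preconnected_induce_accumulate {L : ℕ → Set V} {n : ℕ}
    (hpre : ∀ i ≤ n, (G.induce (L i)).Preconnected)
    (hlink : ∀ i < n, ∃ x ∈ L i, ∃ y ∈ L (i + 1), G.Adj x y) :
    (G.induce (Set.accumulate L n)).Preconnected := by
  induction n with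
  | zero => rw [Set.accumulate_zero_nat]; exact hpre 0 le_rfl
  | succ n ih =>
    obtain ⟨x, hx, y, hy, hxy⟩ := hlink n n.lt_succ_self
    rw [Set.accumulate_succ]
    have ih' := ih (fun i hi => hpre i (by omega)) (fun i hi => hlink i (by omega))
    have hx' : x ∈ Set.accumulate L n := Set.subset_accumulate hx
    exact (connected_induce_union ih' (hpre _ le_rfl) hx' hy hxy).preconnected

theorem nonempty_pathGraph_embedding_of_layers {L : ℕ → Set V} {n t : ℕ}
    (hdisj : Pairwise (Disjoint on L))
    (hstep : ∀ i j, ∀ x ∈ L i, ∀ y ∈ L j, G.Adj x y → j ≤ i + 1)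
    (hpre : ∀ i ≤ n, (G.induce (L i)).Preconnected)
    (hlink : ∀ i < n, ∃ x ∈ L i, ∃ y ∈ L (i + 1), G.Adj x y)
    (hu : u ∈ L 0) (hv : v ∈ L n) (ht : t ≤ n + 1) : Nonempty (pathGraph t ↪g G) := by
  set S := Set.accumulate L n
  let u' : S := ⟨u, Set.mem_accumulate.mpr ⟨0, n.zero_le, hu⟩⟩
  let v' : S := ⟨v, Set.subset_accumulate hv⟩
  have hreach : (G.induce S).Reachable u' v' := preconnected_induce_accumulate hpre hlink u' v'
  obtain ⟨p, hp⟩ := hreach.exists_walk_length_eq_dist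
  have hn : n ≤ (G.induce S).dist u' v' := by
    have := p.le_length_of_layers (L := fun i => Subtype.val ⁻¹' L i)
      (fun i j hij => (hdisj hij).preimage _)
      (fun x => by simpa using (Set.mem_accumulate.mp x.2).imp fun _ => And.right)
      (fun i j x hx y hy hxy => hstep i j x hx y hy hxy) hu hv
    omega
  obtain ⟨e⟩ := hreach.nonempty_pathGraph_embedding (t := t) (by omega)
  exact ⟨(Embedding.induce S).comp e⟩

end SimpleGraph

section ChainLayer

variable {V : Type*} {G : SimpleGraph V} {m : ℕ} {Z : Fin m → Set V}
  {v : ∀ i j : Fin m, i < j → V}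

def chainLayer (Z : Fin m → Set V) (v : ∀ i j : Fin m, i < j → V) (n : ℕ) : Set V :=
  {x | (∃ h : Fin m, 2 * (h : ℕ) = n ∧ x ∈ Z h) ∨
    ∃ (i j : Fin m) (hij : i < j), (j : ℕ) = i + 1 ∧ 2 * (i : ℕ) + 1 = n ∧ x = v i j hij}

theorem mem_chainLayer_two_mul {h : Fin m} {x : V} : x ∈ chainLayer Z v (2 * h) ↔ x ∈ Z h := by
  refine ⟨?_, fun hx => .inl ⟨h, rfl, hx⟩⟩
  rintro (⟨h', hh', hx⟩ | ⟨i, j, hij, -, hi, -⟩)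
  · rwa [Fin.ext (by omega : (h : ℕ) = h')]
  · omega

theorem mem_chainLayer_two_mul_add_one {i j : Fin m} (hij : i < j) (hj : (j : ℕ) = i + 1) :
    v i j hij ∈ chainLayer Z v (2 * i + 1) :=
  .inr ⟨i, j, hij, hj, rfl, rfl⟩

theorem preconnected_induce_chainLayer (hZconn : ∀ i, (G.induce (Z i)).Connected) (n : ℕ) :
    (G.induce (chainLayer Z v n)).Preconnected := by
  by_cases heven : ∃ h : Fin m, 2 * (h : ℕ) = n
  · obtain ⟨h, rfl⟩ := heven
    have : chainLayer Z v (2 * h) = Z h := Set.ext fun _ => mem_chainLayer_two_mul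
    rw [this]
    exact (hZconn h).preconnected
  · have hsub : (chainLayer Z v n).Subsingleton := by
      rintro x (⟨h, hh, -⟩ | ⟨i, j, hij, hj, hi, rfl⟩)
      · exact absurd ⟨h, hh⟩ heven
      rintro y (⟨h, hh, -⟩ | ⟨i', j', hij', hj', hi', rfl⟩)
      · exact absurd ⟨h, hh⟩ heven
      obtain rfl : i = i' := Fin.ext (by omega)
      obtain rfl : j = j' := Fin.ext (by omega)
      rfl
    intro x y
    rw [Subtype.ext (hsub x.2 y.2)]

theorem pairwise_disjoint_chainLayer {X Y : Set V} (hXY : Disjoint X Y) (hZY : ∀ i, Z i ⊆ Y)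
    (hZdisj : ∀ i j, i ≠ j → Disjoint (Z i) (Z j))
    (hvX : ∀ i j hij, v i j hij ∈ X)
    (hv : ∀ i j hij h, (∃ z ∈ Z h, G.Adj (v i j hij) z) ↔ (h = i ∨ h = j)) :
    Pairwise (Disjoint on chainLayer Z v) := by
  intro a b hab
  refine Set.disjoint_left.mpr ?_
  rintro x (⟨h, rfl, hx⟩ | ⟨i, j, hij, hj, rfl, rfl⟩)
    (⟨h', hh', hx'⟩ | ⟨i', j', hij', hj', hi', hx'⟩)
  · exact Set.disjoint_left.mp (hZdisj h h' (fun e => hab (by rw [e, hh']))) hx hx'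
  · exact Set.disjoint_left.mp hXY (hx' ▸ hvX _ _ _) (hZY h hx)
  · exact Set.disjoint_left.mp hXY (hvX _ _ _) (hZY h' hx')
  · have h1 := (hv i' j' hij' j).mp (hx' ▸ (hv i j hij j).mpr (.inr rfl))
    have h2 := (hv i j hij j').mp (hx' ▸ (hv i' j' hij' j').mpr (.inr rfl))
    simp only [Fin.ext_iff] at h1 h2
    omega

theorem le_add_one_of_adj_chainLayer {X : Set V} (hX : ∀ a ∈ X, ∀ b ∈ X, ¬ G.Adj a b)
    (hZanti : ∀ i j, i ≠ j → ∀ a ∈ Z i, ∀ b ∈ Z j, ¬ G.Adj a b)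
    (hvX : ∀ i j hij, v i j hij ∈ X)
    (hv : ∀ i j hij h, (∃ z ∈ Z h, G.Adj (v i j hij) z) ↔ (h = i ∨ h = j)) :
    ∀ a b, ∀ x ∈ chainLayer Z v a, ∀ y ∈ chainLayer Z v b, G.Adj x y → b ≤ a + 1 := by
  rintro a b x (⟨h, rfl, hx⟩ | ⟨i, j, hij, hj, rfl, rfl⟩) y
    (⟨h', rfl, hy⟩ | ⟨i', j', hij', hj', rfl, rfl⟩) hxy
  · obtain rfl : h = h' := by_contra fun hne => hZanti h h' hne x hx y hy hxy
    omega
  · have := (hv i' j' hij' h).mp ⟨x, hx, hxy.symm⟩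
    simp only [Fin.ext_iff] at this
    omega
  · have := (hv i j hij h').mp ⟨y, hy, hxy⟩
    simp only [Fin.ext_iff] at this
    omega
  · exact absurd hxy (hX _ (hvX _ _ _) _ (hvX _ _ _))

theorem exists_adj_chainLayer_succ
    (hv : ∀ i j hij h, (∃ z ∈ Z h, G.Adj (v i j hij) z) ↔ (h = i ∨ h = j))
    {n : ℕ} (hn : n < 2 * (m - 1)) :
    ∃ x ∈ chainLayer Z v n, ∃ y ∈ chainLayer Z v (n + 1), G.Adj x y := by
  obtain ⟨k, rfl | rfl⟩ := Nat.even_or_odd' n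
  all_goals
    let i : Fin m := ⟨k, by omega⟩
    let j : Fin m := ⟨k + 1, by omega⟩
    have hij : i < j := Fin.mk_lt_mk.mpr k.lt_succ_self
  · obtain ⟨z, hz, hvz⟩ := (hv i j hij i).mpr (.inl rfl)
    exact ⟨z, mem_chainLayer_two_mul.mpr hz, _, mem_chainLayer_two_mul_add_one hij rfl, hvz.symm⟩
  · obtain ⟨z, hz, hvz⟩ := (hv i j hij j).mpr (.inr rfl)
    refine ⟨_, mem_chainLayer_two_mul_add_one hij rfl, z, ?_, hvz⟩
    rw [show 2 * k + 1 + 1 = 2 * (j : ℕ) by simp [j]; ring]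
    exact mem_chainLayer_two_mul.mpr hz

end ChainLayer

theorem stmt3_general {V : Type*} (G : SimpleGraph V) (t : ℕ)
    (hfree : ¬ IsInducedCopy (SimpleGraph.pathGraph t) G)
    (X Y : Set V) (hXY : Disjoint X Y)
    (hX : ∀ a ∈ X, ∀ b ∈ X, ¬ G.Adj a b)
    (m : ℕ) (Z : Fin m → Set V)
    (hZY : ∀ i, Z i ⊆ Y)
    (hZconn : ∀ i, (G.induce (Z i)).Connected)
    (hZdisj : ∀ i j, i ≠ j → Disjoint (Z i) (Z j))
    (hZanti : ∀ i j, i ≠ j → ∀ a ∈ Z i, ∀ b ∈ Z j, ¬ G.Adj a b)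
    (v : ∀ i j : Fin m, i < j → V)
    (hv : ∀ (i j : Fin m) (hij : i < j), v i j hij ∈ X ∧
      ∀ h : Fin m, (∃ z ∈ Z h, G.Adj (v i j hij) z) ↔ (h = i ∨ h = j)) :
    m ≤ (t + 2) / 2 := by
  by_contra! hm
  have hvX i j hij := (hv i j hij).1
  have hvZ i j hij := (hv i j hij).2
  obtain ⟨⟨u, hu⟩⟩ := (hZconn ⟨0, by omega⟩).nonempty
  obtain ⟨⟨w, hw⟩⟩ := (hZconn ⟨m - 1, by omega⟩).nonempty
  obtain ⟨e⟩ := SimpleGraph.nonempty_pathGraph_embedding_of_layers (t := t)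
    (pairwise_disjoint_chainLayer hXY hZY hZdisj hvX hvZ)
    (le_add_one_of_adj_chainLayer hX hZanti hvX hvZ)
    (fun n _ => preconnected_induce_chainLayer hZconn n)
    (fun n hn => exists_adj_chainLayer_succ hvZ hn)
    (mem_chainLayer_two_mul.mpr hu) (mem_chainLayer_two_mul.mpr hw) (by omega)
  exact hfree ⟨e.toEmbedding, fun a b => e.map_adj_iff⟩

theorem stmt3 {V : Type*} (G : SimpleGraph V) (t : ℕ) (ht : 0 < t)
    (hfree : ¬ IsInducedCopy (SimpleGraph.pathGraph t) G)
    (X Y : Set V) (hXY : Disjoint X Y)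
    (hX : ∀ a ∈ X, ∀ b ∈ X, ¬ G.Adj a b)
    (m : ℕ) (Z : Fin m → Set V)
    (hZY : ∀ i, Z i ⊆ Y)
    (hZconn : ∀ i, (G.induce (Z i)).Connected)
    (hZdisj : ∀ i j, i ≠ j → Disjoint (Z i) (Z j))
    (hZanti : ∀ i j, i ≠ j → ∀ a ∈ Z i, ∀ b ∈ Z j, ¬ G.Adj a b)
    (v : ∀ i j : Fin m, i < j → V)
    (hv : ∀ (i j : Fin m) (hij : i < j), v i j hij ∈ X ∧
      ∀ h : Fin m, (∃ z ∈ Z h, G.Adj (v i j hij) z) ↔ (h = i ∨ h = j)) :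
    m ≤ (t + 2) / 2 :=
  stmt3_general G t hfree X Y hXY hX m Z hZY hZconn hZdisj hZanti v hv
end

section
/- Let G be a graph, L a list assignment with values in subsets of {1,2,3}, and let {i,j,k} = {1,2,3}. Let w be a vertex with L(w) = {1,2,3}, with neighbors n and n' where L(n) = {i,j} and L(n') = {j,k}, and suppose some vertex u with L(u) = {i,k} is adjacent to both n and n'. Then in every proper coloring c of G respecting the lists, c(w) ≠ j. Hence (G,L) is colorable if and only if (G,L') is, where L' changes only L(w) to {i,k}. -/
/-- `(G, L)` has a proper coloring respecting the lists. -/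
def ListColorable {V : Type*} (G : SimpleGraph V) (L : V → Set ℕ) : Prop :=
  ∃ c : V → ℕ, (∀ a b, G.Adj a b → c a ≠ c b) ∧ ∀ a, c a ∈ L a

theorem stmt10 {V : Type*} [DecidableEq V] (G : SimpleGraph V) (L : V → Set ℕ)
    (i j k : ℕ) (hijk : ({i, j, k} : Set ℕ) = {1, 2, 3})
    (hij : i ≠ j) (hik : i ≠ k) (hjk : j ≠ k)
    (w n n' u : V)
    (hLw : L w = {1, 2, 3}) (hLn : L n = {i, j}) (hLn' : L n' = {j, k})
    (hLu : L u = {i, k})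
    (hwn : G.Adj w n) (hwn' : G.Adj w n') (hun : G.Adj u n) (hun' : G.Adj u n') :
    (∀ c : V → ℕ, (∀ a a', G.Adj a a' → c a ≠ c a') → (∀ a, c a ∈ L a) → c w ≠ j) ∧
    (ListColorable G L ↔ ListColorable G (Function.update L w {i, k})) := by
  have key : ∀ c : V → ℕ, (∀ a a', G.Adj a a' → c a ≠ c a') → (∀ a, c a ∈ L a) →
      c w ≠ j := by
    intro c hc hl hcw
    have hcu := hl u
    rw [hLu] at hcu
    have hcn := hl n
    rw [hLn] at hcn
    have hcn' := hl n'
    rw [hLn'] at hcn'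
    rcases hcu with hcu | hcu
    · -- c u = i, so c n ≠ i, so c n = j, contradicting c w = j
      have : c n = j := by
        rcases hcn with h | h
        · exact absurd (h.trans hcu.symm) (hc u n hun).symm
        · exact h
      exact hc w n hwn (hcw.trans this.symm)
    · -- c u = k, so c n' = j
      have : c n' = j := by
        rcases hcn' with h | h
        · exact h
        · exact absurd (h.trans hcu.symm) (hc u n' hun').symm
      exact hc w n' hwn' (hcw.trans this.symm)
  refine ⟨key, ?_, ?_⟩
  · rintro ⟨c, hc, hl⟩
    refine ⟨c, hc, fun a => ?_⟩
    rcases eq_or_ne a w with rfl | ha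
    · rw [Function.update_self]
      have hcw := hl a
      rw [hLw, ← hijk] at hcw
      rcases hcw with h | h | h
      · exact Or.inl h
      · exact absurd h (key c hc hl)
      · exact Or.inr h
    · rw [Function.update_of_ne ha]; exact hl a
  · rintro ⟨c, hc, hl⟩
    refine ⟨c, hc, fun a => ?_⟩
    rcases eq_or_ne a w with rfl | ha
    · have := hl a
      rw [Function.update_self] at this
      rw [hLw, ← hijk]
      rcases this with h | h
      · exact Or.inl h
      · exact Or.inr (Or.inr h)
    · have := hl a
      rwa [Function.update_of_ne ha] at this
end

section
/- The 7-vertex graph H* defined as follows is 4-critical: vertices v_1, v_2, v_3, c_1, c_2, c_3, u; edges: v_1v_2, v_2v_3, v_3v_1 (a triangle), c_1v_1, c_1v_2, c_2v_2, c_2v_3, c_3v_3, c_3v_1, and uc_1, uc_2, uc_3. That is, χ(H*) = 4 and χ(H* − v) ≤ 3 for every vertex v. Moreover {c_1, c_2, c_3} is a stable set and H* is P_5-free. -/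
/-- The graph `H*`: vertices `0,1,2` are `v₁,v₂,v₃` (a triangle), `3,4,5` are `c₁,c₂,c₃`,
and `6` is `u`. -/
def Hstar : SimpleGraph (Fin 7) :=
  SimpleGraph.fromRel (fun a b =>
    (a, b) ∈ ([(0, 1), (1, 2), (0, 2), (3, 0), (3, 1), (4, 1), (4, 2), (5, 2), (5, 0),
      (6, 3), (6, 4), (6, 5)] : List (Fin 7 × Fin 7)))

instance : DecidableRel Hstar.Adj := fun a b =>
  decidable_of_iff _ (SimpleGraph.fromRel_adj _ a b).symm

set_option maxHeartbeats 2000000 in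
set_option synthInstance.maxHeartbeats 400000 in
set_option synthInstance.maxSize 2048 in
lemma key3 : ∀ x0 x1 x2 x3 x4 x5 x6 : Fin 3,
    ¬(x0≠x1 ∧ x1≠x2 ∧ x0≠x2 ∧ x3≠x0 ∧ x3≠x1 ∧ x4≠x1 ∧ x4≠x2 ∧ x5≠x2 ∧ x5≠x0 ∧
      x6≠x3 ∧ x6≠x4 ∧ x6≠x5) := by decide

lemma not_col3 : ¬ Hstar.Colorable 3 := by
  rintro ⟨c⟩
  exact key3 (c 0) (c 1) (c 2) (c 3) (c 4) (c 5) (c 6)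
    ⟨c.valid (by decide), c.valid (by decide), c.valid (by decide), c.valid (by decide),
     c.valid (by decide), c.valid (by decide), c.valid (by decide), c.valid (by decide),
     c.valid (by decide), c.valid (by decide), c.valid (by decide), c.valid (by decide)⟩

lemma col4 : Hstar.Colorable 4 :=
  ⟨SimpleGraph.Coloring.mk (![0, 1, 2, 2, 0, 1, 3] : Fin 7 → Fin 4)
    (by decide)⟩

lemma induce_col (v : Fin 7) (f : Fin 7 → Fin 3)
    (h : ∀ a b : Fin 7, a ≠ v → b ≠ v → Hstar.Adj a b → f a ≠ f b) :
    (Hstar.induce {x | x ≠ v}).Colorable 3 :=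
  ⟨SimpleGraph.Coloring.mk (fun x => f x.1) (by
    rintro ⟨a, ha⟩ ⟨b, hb⟩ hab
    exact h a b ha hb hab)⟩

theorem stmt12 :
    Hstar.chromaticNumber = 4 ∧
    (∀ v : Fin 7, (Hstar.induce {x | x ≠ v}).Colorable 3) ∧
    (∀ a ∈ ({3, 4, 5} : Set (Fin 7)), ∀ b ∈ ({3, 4, 5} : Set (Fin 7)), ¬ Hstar.Adj a b) ∧
    ¬ IsInducedCopy (SimpleGraph.pathGraph 5) Hstar := by
  refine ⟨?_, ?_, ?_, ?_⟩
  · refine le_antisymm ?_ ?_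
    · have := SimpleGraph.chromaticNumber_le_iff_colorable.mpr col4
      exact_mod_cast this
    · by_contra h
      push_neg at h
      have h4 : Hstar.chromaticNumber ≤ 3 := by
        have := Order.le_of_lt_add_one (by exact_mod_cast h : Hstar.chromaticNumber < 3 + 1)
        exact_mod_cast this
      exact not_col3 (SimpleGraph.chromaticNumber_le_iff_colorable.mp (by exact_mod_cast h4))
  · intro v
    fin_cases v
    · exact induce_col 0 ![2, 0, 1, 2, 2, 2, 0] (by decide)
    · exact induce_col 1 ![0, 2, 1, 2, 2, 2, 0] (by decide)
    · exact induce_col 2 ![0, 1, 2, 2, 2, 2, 0] (by decide)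
    · exact induce_col 3 ![0, 1, 2, 0, 0, 1, 2] (by decide)
    · exact induce_col 4 ![0, 1, 2, 2, 0, 1, 0] (by decide)
    · exact induce_col 5 ![0, 1, 2, 2, 0, 0, 1] (by decide)
    · exact induce_col 6 ![0, 1, 2, 2, 0, 1, 0] (by decide)
  · intro a ha b hb
    simp only [Set.mem_insert_iff, Set.mem_singleton_iff] at ha hb
    rcases ha with rfl | rfl | rfl <;> rcases hb with rfl | rfl | rfl <;> decide
  · rintro ⟨f, hf⟩
    have key : ∀ y0 y1 y2 y3 y4 : Fin 7,
        ¬(Hstar.Adj y0 y1 ∧ Hstar.Adj y1 y2 ∧ Hstar.Adj y2 y3 ∧ Hstar.Adj y3 y4 ∧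
          ¬Hstar.Adj y0 y2 ∧ ¬Hstar.Adj y0 y3 ∧ ¬Hstar.Adj y0 y4 ∧
          ¬Hstar.Adj y1 y3 ∧ ¬Hstar.Adj y1 y4 ∧ ¬Hstar.Adj y2 y4) := by decide
    have pa : ∀ a b : Fin 5, (SimpleGraph.pathGraph 5).Adj a b ↔
        (a.val + 1 = b.val ∨ b.val + 1 = a.val) := fun a b => SimpleGraph.pathGraph_adj
    exact key (f 0) (f 1) (f 2) (f 3) (f 4)
      ⟨(hf 0 1).mpr (by rw [pa]; decide), (hf 1 2).mpr (by rw [pa]; decide),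
       (hf 2 3).mpr (by rw [pa]; decide), (hf 3 4).mpr (by rw [pa]; decide),
       fun h => (by rw [pa]; decide : ¬(SimpleGraph.pathGraph 5).Adj 0 2) ((hf 0 2).mp h),
       fun h => (by rw [pa]; decide : ¬(SimpleGraph.pathGraph 5).Adj 0 3) ((hf 0 3).mp h),
       fun h => (by rw [pa]; decide : ¬(SimpleGraph.pathGraph 5).Adj 0 4) ((hf 0 4).mp h),
       fun h => (by rw [pa]; decide : ¬(SimpleGraph.pathGraph 5).Adj 1 3) ((hf 1 3).mp h),
       fun h => (by rw [pa]; decide : ¬(SimpleGraph.pathGraph 5).Adj 1 4) ((hf 1 4).mp h),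
       fun h => (by rw [pa]; decide : ¬(SimpleGraph.pathGraph 5).Adj 2 4) ((hf 2 4).mp h)⟩
end

section
/- Let G be a graph in which the vertex sets W and B are disjoint, W is a stable set anticomplete to V(G) \ (W ∪ B), and B ⊆ V(G) \ W. Suppose G|(B ∪ W) is P_6-free. Let s = a-b-c, s_1 = x_1-y_1-z_1, s_2 = x_2-y_2-z_2 be seagulls (induced 3-vertex paths) with bodies b, y_1, y_2 ∈ W and wings in B, with the nine vertices distinct, such that: s_1 and s_2 are each related to s (meaning: a is adjacent to z_l, c is adjacent to x_l, and there are no other edges between s and s_l, for l = 1, 2); y_1 is anticomplete to {x_2, z_2}; y_2 is anticomplete to {x_1, z_1}; c is non-adjacent to each of z_1, z_2; x_1 is non-adjacent to x_2; and z_1 is non-adjacent to z_2. Then s_1 is related to s_2: x_1 is adjacent to z_2, x_2 is adjacent to z_1, and these are the only edges between {x_1,y_1,z_1} and {x_2,y_2,z_2}. -/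
lemma vec6_five {α : Type*} (a b c d e f : α) : ![a,b,c,d,e,f] 5 = f := rfl

lemma buildP6 {V : Type*} (G : SimpleGraph V) (S : Set V)
    (v0 v1 v2 v3 v4 v5 : V)
    (m0 : v0 ∈ S) (m1 : v1 ∈ S) (m2 : v2 ∈ S) (m3 : v3 ∈ S) (m4 : v4 ∈ S) (m5 : v5 ∈ S)
    (e01 : G.Adj v0 v1) (e12 : G.Adj v1 v2) (e23 : G.Adj v2 v3)
    (e34 : G.Adj v3 v4) (e45 : G.Adj v4 v5)
    (n02 : ¬ G.Adj v0 v2) (n03 : ¬ G.Adj v0 v3) (n04 : ¬ G.Adj v0 v4) (n05 : ¬ G.Adj v0 v5)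
    (n13 : ¬ G.Adj v1 v3) (n14 : ¬ G.Adj v1 v4) (n15 : ¬ G.Adj v1 v5)
    (n24 : ¬ G.Adj v2 v4) (n25 : ¬ G.Adj v2 v5) (n35 : ¬ G.Adj v3 v5)
    (d02 : v0 ≠ v2) (d03 : v0 ≠ v3) (d04 : v0 ≠ v4) (d05 : v0 ≠ v5)
    (d13 : v1 ≠ v3) (d14 : v1 ≠ v4) (d15 : v1 ≠ v5)
    (d24 : v2 ≠ v4) (d25 : v2 ≠ v5) (d35 : v3 ≠ v5) :
    IsInducedCopy (SimpleGraph.pathGraph 6) (G.induce S) := by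
  have d01 : v0 ≠ v1 := G.ne_of_adj e01
  have d12 : v1 ≠ v2 := G.ne_of_adj e12
  have d23 : v2 ≠ v3 := G.ne_of_adj e23
  have d34 : v3 ≠ v4 := G.ne_of_adj e34
  have d45 : v4 ≠ v5 := G.ne_of_adj e45
  have n02' : ¬ G.Adj v2 v0 := fun h => n02 h.symm
  have n03' : ¬ G.Adj v3 v0 := fun h => n03 h.symm
  have n04' : ¬ G.Adj v4 v0 := fun h => n04 h.symm
  have n05' : ¬ G.Adj v5 v0 := fun h => n05 h.symm
  have n13' : ¬ G.Adj v3 v1 := fun h => n13 h.symm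
  have n14' : ¬ G.Adj v4 v1 := fun h => n14 h.symm
  have n15' : ¬ G.Adj v5 v1 := fun h => n15 h.symm
  have n24' : ¬ G.Adj v4 v2 := fun h => n24 h.symm
  have n25' : ¬ G.Adj v5 v2 := fun h => n25 h.symm
  have n35' : ¬ G.Adj v5 v3 := fun h => n35 h.symm
  have e01' := e01.symm
  have e12' := e12.symm
  have e23' := e23.symm
  have e34' := e34.symm
  have e45' := e45.symm
  let f : Fin 6 → S := ![⟨v0, m0⟩, ⟨v1, m1⟩, ⟨v2, m2⟩, ⟨v3, m3⟩, ⟨v4, m4⟩, ⟨v5, m5⟩]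
  have hval : ∀ i, (f i : V) = ![v0, v1, v2, v3, v4, v5] i := by
    intro i
    fin_cases i <;> rfl
  have hinj : Function.Injective f := by
    intro i j h
    have h' : (![v0, v1, v2, v3, v4, v5] i) = ![v0, v1, v2, v3, v4, v5] j := by
      rw [← hval, ← hval, h]
    fin_cases i <;> fin_cases j <;> revert h' <;>
      simp [vec6_five, d01, d02, d03, d04, d05, d12, d13, d14, d15,
        d23, d24, d25, d34, d35, d45, d01.symm, d02.symm, d03.symm, d04.symm, d05.symm,
        d12.symm, d13.symm, d14.symm, d15.symm, d23.symm, d24.symm, d25.symm,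
        d34.symm, d35.symm, d45.symm]
  refine ⟨⟨f, hinj⟩, fun i j => ?_⟩
  show G.Adj ((f i : V)) ((f j : V)) ↔ _
  rw [hval i, hval j]
  fin_cases i <;> fin_cases j <;>
    simp [vec6_five, SimpleGraph.pathGraph_adj, e01, e12, e23, e34, e45, e01', e12', e23', e34', e45',
      n02, n03, n04, n05, n13, n14, n15, n24, n25, n35,
      n02', n03', n04', n05', n13', n14', n15', n24', n25', n35'] <;>
    first | assumption | decide

theorem stmt15 {V : Type*} (G : SimpleGraph V) (W B : Set V)
    (hWB : Disjoint W B)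
    (hWstable : ∀ u ∈ W, ∀ u' ∈ W, ¬ G.Adj u u')
    (hWanti : ∀ w ∈ W, ∀ u, u ∉ W ∪ B → ¬ G.Adj w u)
    (hP6 : ¬ IsInducedCopy (SimpleGraph.pathGraph 6) (G.induce (B ∪ W)))
    (a b c x₁ y₁ z₁ x₂ y₂ z₂ : V)
    (hb : b ∈ W) (hy₁ : y₁ ∈ W) (hy₂ : y₂ ∈ W)
    (ha : a ∈ B) (hc : c ∈ B) (hx₁ : x₁ ∈ B) (hz₁ : z₁ ∈ B)
    (hx₂ : x₂ ∈ B) (hz₂ : z₂ ∈ B)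
    (hdist : ([a, b, c, x₁, y₁, z₁, x₂, y₂, z₂] : List V).Pairwise (· ≠ ·))
    -- the three seagulls
    (hab : G.Adj a b) (hbc : G.Adj b c) (hac : ¬ G.Adj a c)
    (hs₁ : G.Adj x₁ y₁ ∧ G.Adj y₁ z₁ ∧ ¬ G.Adj x₁ z₁)
    (hs₂ : G.Adj x₂ y₂ ∧ G.Adj y₂ z₂ ∧ ¬ G.Adj x₂ z₂)
    -- s₁ and s₂ are each related to s = a-b-c
    (hrel₁ : G.Adj a z₁ ∧ G.Adj c x₁ ∧ ¬ G.Adj a x₁ ∧ ¬ G.Adj a y₁ ∧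
      ¬ G.Adj b x₁ ∧ ¬ G.Adj b y₁ ∧ ¬ G.Adj b z₁ ∧ ¬ G.Adj c y₁ ∧ ¬ G.Adj c z₁)
    (hrel₂ : G.Adj a z₂ ∧ G.Adj c x₂ ∧ ¬ G.Adj a x₂ ∧ ¬ G.Adj a y₂ ∧
      ¬ G.Adj b x₂ ∧ ¬ G.Adj b y₂ ∧ ¬ G.Adj b z₂ ∧ ¬ G.Adj c y₂ ∧ ¬ G.Adj c z₂)
    -- anticompleteness of the bodies to the other seagull's wings
    (hy₁anti : ¬ G.Adj y₁ x₂ ∧ ¬ G.Adj y₁ z₂)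
    (hy₂anti : ¬ G.Adj y₂ x₁ ∧ ¬ G.Adj y₂ z₁)
    -- additional non-edges among the wings
    (hxx : ¬ G.Adj x₁ x₂) (hzz : ¬ G.Adj z₁ z₂) :
    ∀ p ∈ ({x₁, y₁, z₁} : Set V), ∀ q ∈ ({x₂, y₂, z₂} : Set V),
      (G.Adj p q ↔ (p = x₁ ∧ q = z₂) ∨ (p = z₁ ∧ q = x₂)) := by
  simp only [List.pairwise_cons, List.mem_cons, List.mem_singleton, List.not_mem_nil,
    List.Pairwise.nil, and_true, forall_eq_or_imp, forall_eq, IsEmpty.forall_iff,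
    implies_true] at hdist
  obtain ⟨⟨dab, dac, dax₁, day₁, daz₁, dax₂, day₂, daz₂⟩,
    ⟨dbc, dbx₁, dby₁, dbz₁, dbx₂, dby₂, dbz₂⟩,
    ⟨dcx₁, dcy₁, dcz₁, dcx₂, dcy₂, dcz₂⟩,
    ⟨dx₁y₁, dx₁z₁, dx₁x₂, dx₁y₂, dx₁z₂⟩,
    ⟨dy₁z₁, dy₁x₂, dy₁y₂, dy₁z₂⟩,
    ⟨dz₁x₂, dz₁y₂, dz₁z₂⟩, ⟨dx₂y₂, dx₂z₂⟩, dy₂z₂⟩ := hdist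
  obtain ⟨hs₁xy, hs₁yz, hs₁xz⟩ := hs₁
  obtain ⟨hs₂xy, hs₂yz, hs₂xz⟩ := hs₂
  obtain ⟨h₁az, h₁cx, h₁ax, h₁ay, h₁bx, h₁by, h₁bz, h₁cy, h₁cz⟩ := hrel₁
  obtain ⟨h₂az, h₂cx, h₂ax, h₂ay, h₂bx, h₂by, h₂bz, h₂cy, h₂cz⟩ := hrel₂
  obtain ⟨hy₁x₂, hy₁z₂⟩ := hy₁anti
  obtain ⟨hy₂x₁, hy₂z₁⟩ := hy₂anti
  have hyy : ¬ G.Adj y₁ y₂ := hWstable y₁ hy₁ y₂ hy₂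
  -- key adjacency 1 : x₁ ~ z₂ (else y₁-x₁-c-x₂-y₂-z₂ is an induced P6)
  have key1 : G.Adj x₁ z₂ := by
    by_contra hxz
    exact hP6 <| buildP6 G (B ∪ W) y₁ x₁ c x₂ y₂ z₂
      (Or.inr hy₁) (Or.inl hx₁) (Or.inl hc) (Or.inl hx₂) (Or.inr hy₂) (Or.inl hz₂)
      hs₁xy.symm h₁cx.symm h₂cx hs₂xy hs₂yz
      (fun h => h₁cy h.symm) hy₁x₂ hyy hy₁z₂ hxx (fun h => hy₂x₁ h.symm) hxz
      h₂cy h₂cz hs₂xz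
      (Ne.symm dcy₁) dy₁x₂ dy₁y₂ dy₁z₂ dx₁x₂ dx₁y₂ dx₁z₂ dcy₂ dcz₂ dx₂z₂
  -- key adjacency 2 : x₂ ~ z₁ (else y₂-x₂-c-x₁-y₁-z₁ is an induced P6)
  have key2 : G.Adj x₂ z₁ := by
    by_contra hxz
    exact hP6 <| buildP6 G (B ∪ W) y₂ x₂ c x₁ y₁ z₁
      (Or.inr hy₂) (Or.inl hx₂) (Or.inl hc) (Or.inl hx₁) (Or.inr hy₁) (Or.inl hz₁)
      hs₂xy.symm h₂cx.symm h₁cx hs₁xy hs₁yz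
      (fun h => h₂cy h.symm) hy₂x₁ (fun h => hyy h.symm) hy₂z₁
      (fun h => hxx h.symm) (fun h => hy₁x₂ h.symm) hxz
      h₁cy h₁cz hs₁xz
      (Ne.symm dcy₂) (Ne.symm dx₁y₂) (Ne.symm dy₁y₂) (Ne.symm dz₁y₂)
      (Ne.symm dx₁x₂) (Ne.symm dy₁x₂) (Ne.symm dz₁x₂) dcy₁ dcz₁ dx₁z₁
  intro p hp q hq
  have hz₁y₂' : ¬ G.Adj z₁ y₂ := fun h => hy₂z₁ h.symm
  have hx₁y₂' : ¬ G.Adj x₁ y₂ := fun h => hy₂x₁ h.symm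
  rcases hp with rfl | rfl | rfl <;> rcases hq with rfl | rfl | rfl <;>
    simp [key1, key2.symm, hxx, hzz, hy₁x₂, hy₁z₂, hyy, hz₁y₂', hx₁y₂',
      dx₁z₁, dx₂z₂, dy₂z₂, dy₁z₁, dz₁z₂,
      Ne.symm dx₁y₁, Ne.symm dx₁z₁, Ne.symm dx₂y₂, Ne.symm dx₂z₂, Ne.symm dy₂z₂,
      dy₁x₂, dy₁y₂, dy₁z₂, dx₁x₂, dx₁y₂, dx₁z₂, dz₁x₂, dz₁y₂]
end
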